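/- arXiv:2506.22621 — 3 statements merged into one kernel-verified Lean document; each statement's English description precedes it below -/
import Mathlib

section
/- For all real numbers a, b, c, the inequality |a−b|/(√(a²+1)·√(b²+1)) ≤ |a−c|/(√(a²+1)·√(c²+1)) + |c−b|/(√(c²+1)·√(b²+1)) holds (triangle inequality for the algebraic distance kernel). -/
/-!
Put `θ x = arctan x`. Since `sin (θ x) = x / √(x² + 1)` and `cos (θ x) = 1 / √(x² + 1)`, the
addition formula gives `f x y = |sin (θ x - θ y)|`, and `|sin|` is subadditive because
`|cos| ≤ 1`.
-/

open Real

theorem abs_sin_add_le (u v : ℝ) : |sin (u + v)| ≤ |sin u| + |sin v| :=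
  calc |sin (u + v)| = |sin u * cos v + cos u * sin v| := by rw [sin_add]
    _ ≤ |sin u| * |cos v| + |cos u| * |sin v| := by
      simpa only [abs_mul] using abs_add_le (sin u * cos v) (cos u * sin v)
    _ ≤ |sin u| + |sin v| :=
      add_le_add (mul_le_of_le_one_right (abs_nonneg _) (abs_cos_le_one v))
        (mul_le_of_le_one_left (abs_nonneg _) (abs_cos_le_one u))

theorem sin_arctan_sub_arctan (x y : ℝ) :
    sin (arctan x - arctan y) = (x - y) / (√(x ^ 2 + 1) * √(y ^ 2 + 1)) := by
  rw [sin_sub, sin_arctan, cos_arctan, sin_arctan, cos_arctan, add_comm 1 (x ^ 2),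
    add_comm 1 (y ^ 2)]
  field_simp

/-- Triangle inequality for the core of the algebraic distance. -/
theorem algDist_triangle (a b c : ℝ) :
    |a - b| / (Real.sqrt (a ^ 2 + 1) * Real.sqrt (b ^ 2 + 1)) ≤
      |a - c| / (Real.sqrt (a ^ 2 + 1) * Real.sqrt (c ^ 2 + 1)) +
        |c - b| / (Real.sqrt (c ^ 2 + 1) * Real.sqrt (b ^ 2 + 1)) := by
  have h := abs_sin_add_le (arctan a - arctan c) (arctan c - arctan b)
  rw [sub_add_sub_cancel] at h
  simpa only [sin_arctan_sub_arctan, abs_div, abs_mul, abs_of_nonneg (sqrt_nonneg _)] using h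
end

section
/- The function d(x,y) = |x−y|/(√(x²+1)·√(y²+1)) on ℝ is a metric: it is nonnegative, symmetric, vanishes exactly when x = y, and satisfies the triangle inequality. -/
/-- The one-dimensional algebraic distance. -/
noncomputable def algDist (x y : ℝ) : ℝ :=
  |x - y| / (Real.sqrt (x ^ 2 + 1) * Real.sqrt (y ^ 2 + 1))

lemma sq_aux (a : ℝ) : Real.sqrt (a ^ 2 + 1) ^ 2 = a ^ 2 + 1 :=
  Real.sq_sqrt (by positivity)

lemma sq_pos_aux (a : ℝ) : 0 < Real.sqrt (a ^ 2 + 1) :=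
  Real.sqrt_pos.mpr (by positivity)

lemma cs_aux (a b : ℝ) : |a * b + 1| ≤ Real.sqrt (a ^ 2 + 1) * Real.sqrt (b ^ 2 + 1) := by
  have h : |a * b + 1| = Real.sqrt ((a * b + 1) ^ 2) := by
    rw [Real.sqrt_sq_eq_abs]
  rw [h, ← Real.sqrt_mul (by positivity)]
  apply Real.sqrt_le_sqrt
  nlinarith [sq_nonneg (a - b)]

/-- The algebraic distance is a metric on ℝ. -/
theorem algDist_isMetric :
    (∀ x y : ℝ, 0 ≤ algDist x y) ∧
    (∀ x y : ℝ, algDist x y = algDist y x) ∧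
    (∀ x y : ℝ, algDist x y = 0 ↔ x = y) ∧
    (∀ x y z : ℝ, algDist x y ≤ algDist x z + algDist z y) := by
  refine ⟨fun x y => by unfold algDist; positivity, fun x y => ?_, fun x y => ?_, fun x y z => ?_⟩
  · unfold algDist
    rw [abs_sub_comm, mul_comm]
  · unfold algDist
    constructor
    · intro h
      have hpos : 0 < Real.sqrt (x ^ 2 + 1) * Real.sqrt (y ^ 2 + 1) :=
        mul_pos (sq_pos_aux x) (sq_pos_aux y)
      have := (div_eq_zero_iff.mp h).resolve_right (ne_of_gt hpos)
      have := abs_eq_zero.mp this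
      linarith
    · intro h; subst h; simp
  · unfold algDist
    set A := Real.sqrt (x ^ 2 + 1) with hA
    set B := Real.sqrt (y ^ 2 + 1) with hB
    set C := Real.sqrt (z ^ 2 + 1) with hC
    have hApos := sq_pos_aux x
    have hBpos := sq_pos_aux y
    have hCpos := sq_pos_aux z
    have hA2 := sq_aux x
    have hB2 := sq_aux y
    have hC2 := sq_aux z
    have key : |x - y| * C ≤ |x - z| * B + |z - y| * A := by
      have h1 : |x - y| * C ^ 2 ≤ |x - z| * |z * y + 1| + |z - y| * |x * z + 1| := by
        have hid : (x - y) * (z ^ 2 + 1) = (x - z) * (z * y + 1) + (z - y) * (x * z + 1) := by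
          ring
        calc |x - y| * C ^ 2 = |(x - y) * (z ^ 2 + 1)| := by
              rw [hC2, abs_mul, abs_of_pos (by positivity : (0:ℝ) < z ^ 2 + 1)]
          _ = |(x - z) * (z * y + 1) + (z - y) * (x * z + 1)| := by rw [hid]
          _ ≤ |x - z| * |z * y + 1| + |z - y| * |x * z + 1| := by
              rw [← abs_mul, ← abs_mul]; exact abs_add_le _ _
      have h2 := cs_aux z y
      have h3 := cs_aux x z
      simp only [← hA, ← hB, ← hC] at h2 h3 hApos hBpos hCpos hA2 hB2 hC2
      have h4 : |x - y| * C ^ 2 ≤ |x - z| * (C * B) + |z - y| * (A * C) := by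
        have := mul_le_mul_of_nonneg_left h2 (abs_nonneg (x - z))
        have := mul_le_mul_of_nonneg_left h3 (abs_nonneg (z - y))
        linarith
      nlinarith [abs_nonneg (x - z), abs_nonneg (z - y)]
    rw [div_add_div _ _ (by positivity) (by positivity),
      div_le_div_iff₀ (by positivity) (by positivity)]
    have hexp : (|x - z| * (C * B) + |z - y| * (A * C)) * (A * B)
        = ((|x - z| * B + |z - y| * A) * (A * B)) * C := by ring
    nlinarith [mul_le_mul_of_nonneg_right key (le_of_lt (mul_pos hApos hBpos)),
      mul_pos hApos hBpos, mul_pos (mul_pos hApos hBpos) hCpos]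
end

section
/- For the embedding f(x) = ((1−x²)/(1+x²), 2x/(1+x²)) into ℝ², the Euclidean distance satisfies ‖f(x) − f(y)‖ = 2·|x−y|/(√(x²+1)·√(y²+1)) for all x, y ∈ ℝ. -/
/-- The stereographic-type embedding of ℝ into the Euclidean plane. -/
noncomputable def circleEmbed (x : ℝ) : EuclideanSpace ℝ (Fin 2) :=
  WithLp.toLp 2 ![(1 - x ^ 2) / (1 + x ^ 2), 2 * x / (1 + x ^ 2)]

theorem EuclideanSpace.norm_sq_toLp_fin_two (a b : ℝ) :
    ‖(WithLp.toLp 2 ![a, b] : EuclideanSpace ℝ (Fin 2))‖ ^ 2 = a ^ 2 + b ^ 2 := by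
  simp [EuclideanSpace.norm_sq_eq, Fin.sum_univ_two]

theorem circleEmbed_sub_eq (x y : ℝ) :
    circleEmbed x - circleEmbed y = WithLp.toLp 2
      ![(1 - x ^ 2) / (1 + x ^ 2) - (1 - y ^ 2) / (1 + y ^ 2),
        2 * x / (1 + x ^ 2) - 2 * y / (1 + y ^ 2)] := by
  ext i
  fin_cases i <;> rfl

theorem norm_sq_circleEmbed_sub (x y : ℝ) :
    ‖circleEmbed x - circleEmbed y‖ ^ 2 = 4 * (x - y) ^ 2 / ((x ^ 2 + 1) * (y ^ 2 + 1)) := by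
  rw [circleEmbed_sub_eq, EuclideanSpace.norm_sq_toLp_fin_two]
  field_simp
  ring

/-- The Euclidean distance between embedded points equals twice the algebraic distance. -/
theorem circleEmbed_dist (x y : ℝ) :
    ‖circleEmbed x - circleEmbed y‖ =
      2 * |x - y| / (Real.sqrt (x ^ 2 + 1) * Real.sqrt (y ^ 2 + 1)) := by
  rw [← pow_left_inj₀ (norm_nonneg _) (by positivity) two_ne_zero, norm_sq_circleEmbed_sub,
    div_pow, mul_pow, mul_pow, sq_abs, Real.sq_sqrt (by positivity),
    Real.sq_sqrt (by positivity)]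
  norm_num
end
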